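/- For a càdlàg process M = (M_t)_{t∈ℝ}, the following are equivalent: (a) M_{−∞} := lim_{s→−∞} M_s exists a.s. and (M_t − M_{−∞})_t is a martingale; (b) M is an increment martingale and the family (M_0 − M_s)_{s<0} is uniformly integrable. -/

import Mathlib

open MeasureTheory Filter Set

noncomputable section

variable {Ω : Type*}

/-- The increment of the process `M` over the interval `(s, ·]`:  `ˢM_t = M_t - M_{t ∧ s}`. -/
def incr (M : ℝ → Ω → ℝ) (s t : ℝ) (ω : Ω) : ℝ := M t ω - M (min t s) ω

/-- A real function is càdlàg : right-continuous with left limits. -/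
def Cadlag (f : ℝ → ℝ) : Prop :=
  (∀ t, ContinuousWithinAt f (Set.Ici t) t) ∧
    ∀ t : ℝ, ∃ l, Tendsto f (nhdsWithin t (Set.Iio t)) (nhds l)

/-- The jump `ΔM_t(ω) = M_t(ω) - M_{t-}(ω)`. -/
def jump (M : ℝ → Ω → ℝ) (ω : Ω) (t : ℝ) : ℝ :=
  M t ω - Function.leftLim (fun u => M u ω) t

/-- A filtration indexed by `ℝ` is right-continuous. -/
def RightContinuousFiltration {m : MeasurableSpace Ω} (ℱ : Filtration ℝ m) : Prop :=
  ∀ t : ℝ, (ℱ t : MeasurableSpace Ω) = ⨅ (u : ℝ) (_ : t < u), (ℱ u : MeasurableSpace Ω)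

/-- Each `ℱ t` contains all `μ`-null sets. -/
def CompleteFiltration {m : MeasurableSpace Ω} (ℱ : Filtration ℝ m) (μ : Measure Ω) : Prop :=
  ∀ (t : ℝ) (s : Set Ω), μ s = 0 → MeasurableSet[ℱ t] s

/-- A martingale in the sense of the paper: adapted, integrable, with the martingale property. -/
def IsMart {m : MeasurableSpace Ω} (ℱ : Filtration ℝ m) (μ : Measure Ω) (M : ℝ → Ω → ℝ) : Prop :=
  Martingale M ℱ μ ∧ ∀ t, Integrable (M t) μ

/-- A square integrable martingale. -/
def IsSqMart {m : MeasurableSpace Ω} (ℱ : Filtration ℝ m) (μ : Measure Ω)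
    (M : ℝ → Ω → ℝ) : Prop :=
  IsMart ℱ μ M ∧ ∀ t, MemLp (M t) 2 μ

/-- An increment martingale: a càdlàg process all of whose increment processes are
martingales. -/
def IsIncMart {m : MeasurableSpace Ω} (ℱ : Filtration ℝ m) (μ : Measure Ω)
    (M : ℝ → Ω → ℝ) : Prop :=
  (∀ ω, Cadlag fun t => M t ω) ∧ ∀ s : ℝ, IsMart ℱ μ (incr M s)

/-- An increment square integrable martingale. -/
def IsIncSqMart {m : MeasurableSpace Ω} (ℱ : Filtration ℝ m) (μ : Measure Ω)
    (M : ℝ → Ω → ℝ) : Prop :=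
  (∀ ω, Cadlag fun t => M t ω) ∧ ∀ s : ℝ, IsSqMart ℱ μ (incr M s)

/-- The process `M` stopped at the (finite) random time `τ`. -/
def stopped (M : ℝ → Ω → ℝ) (τ : Ω → ℝ) : ℝ → Ω → ℝ := fun t ω => M (min t (τ ω)) ω

/-- A localizing sequence of real-valued stopping times. -/
def Localizing {m : MeasurableSpace Ω} (ℱ : Filtration ℝ m) (μ : Measure Ω)
    (σ : ℕ → Ω → ℝ) : Prop :=
  (∀ n, IsStoppingTime ℱ (fun ω => ((σ n ω : ℝ) : WithTop ℝ))) ∧ (∀ ω, Monotone fun n => σ n ω) ∧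
    ∀ᵐ ω ∂μ, Tendsto (fun n => σ n ω) atTop atTop

/-- A local martingale indexed by `ℝ`. -/
def IsLocalMart {m : MeasurableSpace Ω} (ℱ : Filtration ℝ m) (μ : Measure Ω)
    (M : ℝ → Ω → ℝ) : Prop :=
  ∃ σ : ℕ → Ω → ℝ, Localizing ℱ μ σ ∧ ∀ n, IsMart ℱ μ (stopped M (σ n))

/-- A locally square integrable martingale indexed by `ℝ`. -/
def IsLocSqMart {m : MeasurableSpace Ω} (ℱ : Filtration ℝ m) (μ : Measure Ω)
    (M : ℝ → Ω → ℝ) : Prop :=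
  ∃ σ : ℕ → Ω → ℝ, Localizing ℱ μ σ ∧ ∀ n, IsSqMart ℱ μ (stopped M (σ n))

/-- An increment local martingale: every increment process is adapted and a local
martingale (with a localizing sequence possibly depending on `s`). -/
def IsIncLocalMart {m : MeasurableSpace Ω} (ℱ : Filtration ℝ m) (μ : Measure Ω)
    (M : ℝ → Ω → ℝ) : Prop :=
  (∀ ω, Cadlag fun t => M t ω) ∧
    ∀ s : ℝ, Adapted ℱ (incr M s) ∧ IsLocalMart ℱ μ (incr M s)

/-- An increment locally square integrable martingale. -/
def IsIncLocSqMart {m : MeasurableSpace Ω} (ℱ : Filtration ℝ m) (μ : Measure Ω)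
    (M : ℝ → Ω → ℝ) : Prop :=
  (∀ ω, Cadlag fun t => M t ω) ∧
    ∀ s : ℝ, Adapted ℱ (incr M s) ∧ IsLocSqMart ℱ μ (incr M s)

/-- A stopping time with values in `(-∞, ∞]` (encoded in `EReal`, `⊥` excluded separately). -/
def IsStoppingTimeE {m : MeasurableSpace Ω} (ℱ : Filtration ℝ m) (τ : Ω → EReal) : Prop :=
  ∀ t : ℝ, MeasurableSet[ℱ t] {ω | τ ω ≤ (t : EReal)}

/-- The process `M` stopped at the `EReal`-valued random time `τ`. -/
def stoppedE (M : ℝ → Ω → ℝ) (τ : Ω → EReal) : ℝ → Ω → ℝ :=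
  fun t ω => M ((min (t : EReal) (τ ω)).toReal) ω

/-- The process `M`, extended to `-∞` by `Z` and stopped at the `EReal`-valued time `τ`,
as a process indexed by `EReal` (only the values on `[-∞, ∞)` are relevant). -/
def stopE' (M : ℝ → Ω → ℝ) (Z : Ω → ℝ) (τ : Ω → EReal) (t : EReal) (ω : Ω) : ℝ :=
  if min t (τ ω) = ⊥ then Z ω else M ((min t (τ ω)).toReal) ω

/-- The filtration extended to the index `-∞` by `ℱ_{-∞} = ⨅ t, ℱ t`. -/
def FE {m : MeasurableSpace Ω} (ℱ : Filtration ℝ m) (t : EReal) : MeasurableSpace Ω :=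
  if t = ⊥ then ⨅ u : ℝ, (ℱ u : MeasurableSpace Ω) else ℱ t.toReal

/-- A martingale indexed by `[-∞, ∞)` with respect to the extended filtration. -/
def IsMartE {m : MeasurableSpace Ω} (ℱ : Filtration ℝ m) (μ : Measure Ω)
    (N : EReal → Ω → ℝ) : Prop :=
  (∀ t : EReal, t ≠ ⊤ → StronglyMeasurable[FE ℱ t] (N t)) ∧
  (∀ t : EReal, t ≠ ⊤ → Integrable (N t) μ) ∧
  ∀ s t : EReal, s ≤ t → t ≠ ⊤ → μ[N t | FE ℱ s] =ᵐ[μ] N s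

/-- The predictable σ-algebra on `ℝ × Ω`, generated by the simple predictable sets
`B × C` with `C ∈ ℱ t` and `B ⊆ (t, ∞)` a bounded Borel set. -/
def predictableSigma {m : MeasurableSpace Ω} (ℱ : Filtration ℝ m) :
    MeasurableSpace (ℝ × Ω) :=
  MeasurableSpace.generateFrom
    {A | ∃ (t : ℝ) (B : Set ℝ) (C : Set Ω), B ⊆ Set.Ioi t ∧ MeasurableSet B ∧
      Bornology.IsBounded B ∧ MeasurableSet[ℱ t] C ∧ A = B ×ˢ C}

/-- A predictable process. -/
def PredictableProc {m : MeasurableSpace Ω} (ℱ : Filtration ℝ m) (X : ℝ → Ω → ℝ) : Prop :=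
  @Measurable (ℝ × Ω) ℝ (predictableSigma ℱ) _ fun p => X p.1 p.2

/-- The process `X` is associated with the family of increment processes `I`. -/
def Assoc {m : MeasurableSpace Ω} (μ : Measure Ω) (I : ℝ → ℝ → Ω → ℝ) (X : ℝ → Ω → ℝ) : Prop :=
  ∀ s : ℝ, ∀ᵐ ω ∂μ, ∀ t, X t ω - X (min t s) ω = I s t ω

/-- `V` is a quadratic variation of the increment local martingale `M`:
`V ∈ A₀(ℱ)`, `ΔV = (ΔM)²` and `(ˢM)² - ˢV` is a local martingale for every `s`. -/
def IsQuadVar {m : MeasurableSpace Ω} (ℱ : Filtration ℝ m) (μ : Measure Ω)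
    (M V : ℝ → Ω → ℝ) : Prop :=
  (∀ ω, Monotone fun t => V t ω) ∧ (∀ ω, Cadlag fun t => V t ω) ∧ Adapted ℱ V ∧
  (∀ᵐ ω ∂μ, Tendsto (fun t => V t ω) atBot (nhds 0)) ∧
  (∀ᵐ ω ∂μ, ∀ t, jump V ω t = (jump M ω t) ^ 2) ∧
  ∀ s : ℝ, IsLocalMart ℱ μ fun t ω => (incr M s t ω) ^ 2 - incr V s t ω

/-- `V` is a predictable quadratic variation of `M`: an increasing predictable càdlàg
adapted locally integrable process with `V_{-∞} = 0` a.s. such that `(ˢM)² - ˢV` is a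
local martingale for every `s`. -/
def IsPredQV {m : MeasurableSpace Ω} (ℱ : Filtration ℝ m) (μ : Measure Ω)
    (M V : ℝ → Ω → ℝ) : Prop :=
  (∀ ω, Monotone fun t => V t ω) ∧ (∀ ω, Cadlag fun t => V t ω) ∧ Adapted ℱ V ∧
  PredictableProc ℱ V ∧
  (∀ᵐ ω ∂μ, Tendsto (fun t => V t ω) atBot (nhds 0)) ∧
  (∃ σ : ℕ → Ω → ℝ, Localizing ℱ μ σ ∧ ∀ n t, Integrable (stopped V (σ n) t) μ) ∧
  ∀ s : ℝ, IsLocalMart ℱ μ fun t ω => (incr M s t ω) ^ 2 - incr V s t ω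

/-- `Mc` is a continuous martingale component of the increment local martingale `M`:
it is continuous, its increments are adapted local martingales, and the increments of
`M - Mc` are purely discontinuous local martingales (orthogonal to every continuous
local martingale vanishing at `-∞`). -/
def IsContMartPart {m : MeasurableSpace Ω} (ℱ : Filtration ℝ m) (μ : Measure Ω)
    (M Mc : ℝ → Ω → ℝ) : Prop :=
  (∀ ω, Continuous fun t => Mc t ω) ∧
  (∀ s : ℝ, Adapted ℱ (incr Mc s)) ∧
  (∀ s : ℝ, IsLocalMart ℱ μ (incr Mc s)) ∧
  (∀ s : ℝ, IsLocalMart ℱ μ fun t ω => incr M s t ω - incr Mc s t ω) ∧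
  ∀ s : ℝ, ∀ N : ℝ → Ω → ℝ, (∀ ω, Continuous fun t => N t ω) → IsLocalMart ℱ μ N →
    (∀ᵐ ω ∂μ, Tendsto (fun t => N t ω) atBot (nhds 0)) →
    IsLocalMart ℱ μ fun t ω => (incr M s t ω - incr Mc s t ω) * N t ω

/-- The Lebesgue–Stieltjes measure on `ℝ` induced by the (pathwise increasing,
right-continuous) process `V` at the outcome `ω`. -/
def stj (V : ℝ → Ω → ℝ) (hm : ∀ ω, Monotone fun t => V t ω)
    (hrc : ∀ ω t, ContinuousWithinAt (fun u => V u ω) (Set.Ici t) t) (ω : Ω) : Measure ℝ :=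
  StieltjesFunction.measure ⟨fun t => V t ω, hm ω, hrc ω⟩

end

/-!
(a) ⇒ (b): if `N = M - Z` is a martingale, the increments of `M` are those of `N`, i.e. differences
of `N` and of `N` stopped at a deterministic time, and `M 0 - M s = N 0 - 𝔼[N 0 | ℱ s]` a.s., a
uniformly integrable family.

(b) ⇒ (a): for `u ≤ s ≤ 0` we have `𝔼[M 0 - M u | ℱ s] = M s - M u`. Truncate `M 0 - M u` at a
level `C` given by uniform integrability: the conditional expectations of the truncation along
decreasing times have orthogonal increments whose total energy is at most `C²`, uniformly in `u`,
so only boundedly many increments of `M` along any decreasing sequence of times can be large in L¹.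
Hence `M s` is L¹-Cauchy as `s → -∞`, and there is `Z` with `𝔼|M s - Z| → 0`. Letting `u → -∞` in
the martingale property of `M - M u` shows that `M - Z` is a martingale (adapted by completeness
of the filtration). Finally Doob's maximal inequality at rational times, together with
right-continuity of the paths, upgrades the L¹ convergence `M s - Z → 0` to almost sure
convergence.
-/

open Topology
open scoped ENNReal

theorem abs_sub_clamp_le {C x : ℝ} (hC : 0 ≤ C) : |x - max (-C) (min C x)| ≤ |x| := by
  rw [abs_le]
  constructor <;> rcases abs_cases x with ⟨h, hx⟩ | ⟨h, hx⟩ <;> rw [h] <;>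
    simp only [max_def, min_def] <;> split_ifs <;> linarith

theorem clamp_eq_self {C x : ℝ} (hx : |x| < C) : max (-C) (min C x) = x := by
  rw [abs_lt] at hx
  rw [min_eq_right hx.2.le, max_eq_right hx.1.le]

theorem abs_le_of_forall_rat_le {f : ℝ → ℝ} {s b c : ℝ} (hf : ContinuousWithinAt f (Ici s) s)
    (hsb : s < b) (h : ∀ q : ℚ, (q : ℝ) ≤ b → |f q| ≤ c) : |f s| ≤ c := by
  obtain ⟨u, -, hu_gt, hu_lim⟩ :=
    Rat.denseRange_cast.exists_seq_strictAnti_tendsto Rat.cast_mono s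
  have hfu : Tendsto (fun n => f (u n)) atTop (𝓝 (f s)) :=
    hf.tendsto.comp (tendsto_nhdsWithin_iff.2 ⟨hu_lim, Eventually.of_forall fun n =>
      mem_Ici.2 (hu_gt n).le⟩)
  exact le_of_tendsto hfu.abs
    ((hu_lim.eventually (gt_mem_nhds hsb)).mono fun n hn => h (u n) (le_of_lt hn))

namespace MeasureTheory

section L1

variable {Ω : Type*} {m0 : MeasurableSpace Ω} {μ : Measure Ω}

theorem integral_abs_eq_toReal_eLpNorm {f : Ω → ℝ} (hf : Integrable f μ) :
    ∫ ω, |f ω| ∂μ = (eLpNorm f 1 μ).toReal := by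
  rw [eLpNorm_one_eq_lintegral_enorm, ← ofReal_integral_norm_eq_lintegral_enorm hf,
    ENNReal.toReal_ofReal (integral_nonneg fun ω => norm_nonneg _)]
  rfl

theorem integral_abs_add_le {f g : Ω → ℝ} (hf : Integrable f μ) (hg : Integrable g μ) :
    ∫ ω, |f ω + g ω| ∂μ ≤ ∫ ω, |f ω| ∂μ + ∫ ω, |g ω| ∂μ :=
  (integral_mono (hf.add hg).abs (hf.abs.add hg.abs) fun _ => abs_add_le _ _).trans_eq
    (integral_add hf.abs hg.abs)

theorem integral_abs_sub_le_add {f g : Ω → ℝ} (hf : Integrable f μ) (hg : Integrable g μ) :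
    ∫ ω, |f ω - g ω| ∂μ ≤ ∫ ω, |f ω| ∂μ + ∫ ω, |g ω| ∂μ :=
  (integral_mono (hf.sub hg).abs (hf.abs.add hg.abs) fun _ => abs_sub _ _).trans_eq
    (integral_add hf.abs hg.abs)

theorem integral_abs_condExp_sub_le {m : MeasurableSpace Ω} {f : Ω → ℝ} (hf : Integrable f μ) :
    ∫ ω, |μ[f|m] ω - f ω| ∂μ ≤ 2 * ∫ ω, |f ω| ∂μ := by
  linarith [integral_abs_sub_le_add (integrable_condExp (m := m) (f := f)) hf,
    integral_abs_condExp_le (μ := μ) (m := m) f]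

theorem integral_abs_condExp_sub_condExp_le {m₁ m₂ : MeasurableSpace Ω} {W V : Ω → ℝ}
    (hW : Integrable W μ) (hV : Integrable V μ) :
    ∫ ω, |μ[W|m₁] ω - μ[W|m₂] ω| ∂μ ≤
      ∫ ω, |μ[V|m₁] ω - μ[V|m₂] ω| ∂μ + 2 * ∫ ω, |W ω - V ω| ∂μ := by
  have hsplit : (fun ω => |μ[W|m₁] ω - μ[W|m₂] ω|) =ᵐ[μ]
      fun ω => |(μ[V|m₁] ω - μ[V|m₂] ω) + (μ[W - V|m₁] ω - μ[W - V|m₂] ω)| := by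
    filter_upwards [condExp_sub hW hV m₁, condExp_sub hW hV m₂] with ω h₁ h₂
    simp only [h₁, h₂, Pi.sub_apply]
    ring_nf
  have h₁ := integral_abs_condExp_le (μ := μ) (m := m₁) (W - V)
  have h₂ := integral_abs_condExp_le (μ := μ) (m := m₂) (W - V)
  have hΔ := integral_abs_sub_le_add (μ := μ) (integrable_condExp (m := m₁) (f := W - V))
    (integrable_condExp (m := m₂) (f := W - V))
  rw [integral_congr_ae hsplit]
  refine (integral_abs_add_le (integrable_condExp.sub integrable_condExp)
    (integrable_condExp.sub integrable_condExp)).trans ?_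
  simp only [Pi.sub_apply] at h₁ h₂ ⊢
  linarith

theorem UniformIntegrable.sub {ι : Type*} {f g : ι → Ω → ℝ} {p : ℝ≥0∞} (hp : 1 ≤ p)
    (hf : UniformIntegrable f p μ) (hg : UniformIntegrable g p μ) :
    UniformIntegrable (f - g) p μ := by
  obtain ⟨Cf, hCf⟩ := hf.2.2
  obtain ⟨Cg, hCg⟩ := hg.2.2
  refine ⟨fun i => (hf.1 i).sub (hg.1 i), hf.2.1.sub hg.2.1 hp hf.1 hg.1, Cf + Cg, fun i => ?_⟩
  calc eLpNorm (f i - g i) p μ ≤ eLpNorm (f i) p μ + eLpNorm (g i) p μ :=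
        eLpNorm_sub_le (hf.1 i) (hg.1 i) hp
    _ ≤ Cf + Cg := add_le_add (hCf i) (hCg i)
    _ = ↑(Cf + Cg) := (ENNReal.coe_add Cf Cg).symm

theorem exists_integrable_tendsto_integral_abs_sub {ι : Type*} {l : Filter ι} [l.NeBot]
    {X : ι → Ω → ℝ} (hX : ∀ i, Integrable (X i) μ)
    (hcau : ∀ ε > 0, ∃ t ∈ l, ∀ i ∈ t, ∀ j ∈ t, ∫ ω, |X i ω - X j ω| ∂μ ≤ ε) :
    ∃ ξ : Ω → ℝ, Integrable ξ μ ∧ Tendsto (fun i => ∫ ω, |X i ω - ξ ω| ∂μ) l (𝓝 0) := by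
  set φ : ι → Ω →₁[μ] ℝ := fun i => (hX i).toL1
  have hdist : ∀ i j, dist (φ i) (φ j) = ∫ ω, |X i ω - X j ω| ∂μ := fun i j => by
    rw [dist_eq_norm, ← Integrable.toL1_sub _ _ (hX i) (hX j), L1.norm_of_fun_eq_integral_norm]
    rfl
  have hφ : Cauchy (map φ l) := by
    refine Metric.cauchy_iff.2 ⟨inferInstance, fun ε hε => ?_⟩
    obtain ⟨t, ht, hts⟩ := hcau (ε / 2) (half_pos hε)
    refine ⟨φ '' t, image_mem_map ht, ?_⟩
    rintro _ ⟨i, hi, rfl⟩ _ ⟨j, hj, rfl⟩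
    rw [hdist]
    linarith [hts i hi j hj]
  obtain ⟨Φ, hΦ⟩ := cauchy_map_iff_exists_tendsto.1 hφ
  refine ⟨Φ, L1.integrable_coeFn Φ, ?_⟩
  refine (tendsto_iff_norm_sub_tendsto_zero.1 hΦ).congr fun i => ?_
  rw [L1.norm_eq_integral_norm]
  refine integral_congr_ae ?_
  filter_upwards [Lp.coeFn_sub (φ i) Φ, (hX i).coeFn_toL1] with ω h₁ h₂
  simp only [h₁, Pi.sub_apply, φ, h₂, Real.norm_eq_abs]

end L1

section L2

variable {Ω : Type*} {m0 : MeasurableSpace Ω} {μ : Measure Ω} [IsProbabilityMeasure μ]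
  {V : Ω → ℝ}

theorem sq_integral_abs_le_integral_sq {f : Ω → ℝ} (hf : MemLp f 2 μ) :
    (∫ ω, |f ω| ∂μ) ^ 2 ≤ ∫ ω, f ω ^ 2 ∂μ := by
  have h := ProbabilityTheory.variance_nonneg |f| μ
  rw [ProbabilityTheory.variance_eq_sub hf.abs] at h
  simpa [sq_abs] using h

theorem integral_sq_condExp_sub_condExp {m₁ m₂ : MeasurableSpace Ω} (h₂₁ : m₂ ≤ m₁)
    (h₁ : m₁ ≤ m0) (hV : MemLp V 2 μ) :
    ∫ ω, (μ[V|m₁] ω - μ[V|m₂] ω) ^ 2 ∂μ = ∫ ω, μ[V|m₁] ω ^ 2 ∂μ - ∫ ω, μ[V|m₂] ω ^ 2 ∂μ := by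
  set y₁ := μ[V|m₁]
  set y₂ := μ[V|m₂]
  have hy₁ : MemLp y₁ 2 μ := hV.condExp one_le_two
  have hy₂ : MemLp y₂ 2 μ := hV.condExp one_le_two
  have hy₂₁ : Integrable (fun ω => y₂ ω * y₁ ω) μ := hy₂.integrable_mul hy₁
  -- the increment `y₁ - y₂` is orthogonal to the `m₂`-measurable `y₂`
  have hcross : ∫ ω, y₂ ω * y₁ ω ∂μ = ∫ ω, y₂ ω ^ 2 ∂μ :=
    calc ∫ ω, y₂ ω * y₁ ω ∂μ = ∫ ω, μ[y₂ * y₁|m₂] ω ∂μ := (integral_condExp (h₂₁.trans h₁)).symm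
      _ = ∫ ω, (y₂ * μ[y₁|m₂]) ω ∂μ := integral_congr_ae
          (condExp_mul_of_stronglyMeasurable_left stronglyMeasurable_condExp hy₂₁
            (hy₁.integrable one_le_two))
      _ = ∫ ω, y₂ ω ^ 2 ∂μ := integral_congr_ae <| by
          filter_upwards [condExp_condExp_of_le h₂₁ h₁ (f := V) (μ := μ)] with ω hω
          simp only [Pi.mul_apply, hω, sq, y₁, y₂]
  have hexpand : (fun ω => (y₁ ω - y₂ ω) ^ 2) =
      fun ω => y₁ ω ^ 2 - 2 * (y₂ ω * y₁ ω) + y₂ ω ^ 2 := by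
    ext ω; ring
  have hfirst : Integrable (fun ω => y₁ ω ^ 2 - 2 * (y₂ ω * y₁ ω)) μ :=
    hy₁.integrable_sq.sub (hy₂₁.const_mul 2)
  rw [hexpand, integral_add hfirst hy₂.integrable_sq,
    integral_sub hy₁.integrable_sq (hy₂₁.const_mul 2), integral_const_mul, hcross]
  ring

theorem integral_sq_condExp_le {m : MeasurableSpace Ω} (hm : m ≤ m0) (hV : MemLp V 2 μ) :
    ∫ ω, μ[V|m] ω ^ 2 ∂μ ≤ ∫ ω, V ω ^ 2 ∂μ := by
  have hself : ∫ ω, μ[V|m0] ω ^ 2 ∂μ = ∫ ω, V ω ^ 2 ∂μ := integral_congr_ae <|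
    (condExp_of_aestronglyMeasurable' le_rfl hV.1 (hV.integrable one_le_two)).fun_comp (· ^ 2)
  have hdiff : 0 ≤ ∫ ω, (μ[V|m0] ω - μ[V|m] ω) ^ 2 ∂μ := integral_nonneg fun ω => sq_nonneg _
  linarith [integral_sq_condExp_sub_condExp hm le_rfl hV]

theorem sum_sq_integral_abs_condExp_sub_le {𝒢 : ℕ → MeasurableSpace Ω} (h𝒢 : Antitone 𝒢)
    (hle : ∀ k, 𝒢 k ≤ m0) (hV : MemLp V 2 μ) (N : ℕ) :
    ∑ k ∈ Finset.range N, (∫ ω, |μ[V|𝒢 k] ω - μ[V|𝒢 (k + 1)] ω| ∂μ) ^ 2 ≤ ∫ ω, V ω ^ 2 ∂μ := by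
  set a : ℕ → ℝ := fun k => ∫ ω, μ[V|𝒢 k] ω ^ 2 ∂μ
  have hstep : ∀ k, (∫ ω, |μ[V|𝒢 k] ω - μ[V|𝒢 (k + 1)] ω| ∂μ) ^ 2 ≤ a k - a (k + 1) := fun k =>
    (sq_integral_abs_le_integral_sq (((hV.condExp one_le_two).sub (hV.condExp one_le_two)))).trans
      (integral_sq_condExp_sub_condExp (h𝒢 k.le_succ) (hle k) hV).le
  calc _ ≤ ∑ k ∈ Finset.range N, (a k - a (k + 1)) := Finset.sum_le_sum fun k _ => hstep k
    _ = a 0 - a N := Finset.sum_range_sub' a N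
    _ ≤ ∫ ω, V ω ^ 2 ∂μ := by
      have haN : 0 ≤ a N := integral_nonneg fun ω => sq_nonneg _
      linarith [integral_sq_condExp_le (hle 0) hV]

theorem card_mul_sq_le_of_le_integral_abs_condExp_sub {𝒢 : ℕ → MeasurableSpace Ω}
    (h𝒢 : Antitone 𝒢) (hle : ∀ k, 𝒢 k ≤ m0) {W V : Ω → ℝ} (hW : Integrable W μ)
    (hV : MemLp V 2 μ) {δ η : ℝ} (hη : 0 ≤ η) (hWV : ∫ ω, |W ω - V ω| ∂μ ≤ δ) {N : ℕ}
    (hN : ∀ k < N, η + 2 * δ ≤ ∫ ω, |μ[W|𝒢 k] ω - μ[W|𝒢 (k + 1)] ω| ∂μ) :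
    N * η ^ 2 ≤ ∫ ω, V ω ^ 2 ∂μ := by
  have hVk : ∀ k < N, η ≤ ∫ ω, |μ[V|𝒢 k] ω - μ[V|𝒢 (k + 1)] ω| ∂μ := fun k hk => by
    linarith [hN k hk, integral_abs_condExp_sub_condExp_le (m₁ := 𝒢 k) (m₂ := 𝒢 (k + 1)) hW
      (hV.integrable one_le_two)]
  calc (N : ℝ) * η ^ 2 = ∑ _k ∈ Finset.range N, η ^ 2 := by simp
    _ ≤ ∑ k ∈ Finset.range N, (∫ ω, |μ[V|𝒢 k] ω - μ[V|𝒢 (k + 1)] ω| ∂μ) ^ 2 :=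
        Finset.sum_le_sum fun k hk => pow_le_pow_left₀ hη (hVk k (Finset.mem_range.1 hk)) 2
    _ ≤ ∫ ω, V ω ^ 2 ∂μ := sum_sq_integral_abs_condExp_sub_le h𝒢 hle hV N

theorem UniformIntegrable.exists_memLp_two_approx {ι : Type*} {f : ι → Ω → ℝ}
    (hf : UniformIntegrable f 1 μ) {δ : ℝ} (hδ : 0 < δ) :
    ∃ C : ℝ, ∀ i, ∃ V : Ω → ℝ, MemLp V 2 μ ∧ ∫ ω, V ω ^ 2 ∂μ ≤ C ∧
      ∫ ω, |f i ω - V ω| ∂μ ≤ δ := by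
  obtain ⟨C, hC⟩ := hf.spec one_ne_zero ENNReal.one_ne_top hδ
  refine ⟨(C : ℝ) ^ 2, fun i => ?_⟩
  set V : Ω → ℝ := fun ω => max (-C) (min (C : ℝ) (f i ω))
  have hVC : ∀ ω, |V ω| ≤ C := fun ω =>
    abs_le.2 ⟨le_max_left _ _, max_le (by linarith [C.2]) (min_le_left _ _)⟩
  have hclamp : Continuous fun x : ℝ => max (-(C : ℝ)) (min (C : ℝ) x) :=
    continuous_const.max (continuous_const.min continuous_id)
  have hV : MemLp V 2 μ :=
    MemLp.of_bound (hclamp.comp_aestronglyMeasurable (hf.1 i)) C (ae_of_all _ hVC)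
  refine ⟨V, hV, ?_, ?_⟩
  · calc ∫ ω, V ω ^ 2 ∂μ ≤ ∫ _, (C : ℝ) ^ 2 ∂μ :=
          integral_mono hV.integrable_sq (integrable_const _) fun ω =>
            sq_le_sq.2 ((hVC ω).trans (le_abs_self _))
      _ = (C : ℝ) ^ 2 := by simp
  · have hdiff : Integrable (fun ω => f i ω - V ω) μ :=
      ((hf.memLp i).integrable le_rfl).sub (hV.integrable one_le_two)
    rw [integral_abs_eq_toReal_eLpNorm hdiff]
    refine ENNReal.toReal_le_of_le_ofReal hδ.le ((eLpNorm_mono fun ω => ?_).trans (hC i))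
    by_cases h : ω ∈ {x | C ≤ ‖f i x‖₊}
    · rw [indicator_of_mem h]
      exact abs_sub_clamp_le C.2
    · have hlt : |f i ω| < C := by
        rw [mem_ofPred_eq, not_le, ← NNReal.coe_lt_coe, coe_nnnorm, Real.norm_eq_abs] at h
        exact h
      rw [indicator_of_notMem h, norm_zero, norm_le_zero_iff, sub_eq_zero]
      exact (clamp_eq_self hlt).symm

end L2

section Martingale

variable {Ω : Type*} {m : MeasurableSpace Ω} {μ : Measure Ω}

def Filtration.comp {ι κ : Type*} [Preorder ι] [Preorder κ] (ℱ : Filtration κ m) {τ : ι → κ}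
    (hτ : Monotone τ) : Filtration ι m :=
  ⟨fun i => ℱ (τ i), fun _ _ hij => ℱ.mono (hτ hij), fun i => ℱ.le (τ i)⟩

theorem Martingale.comp {ι κ : Type*} [Preorder ι] [Preorder κ] {ℱ : Filtration κ m}
    {N : κ → Ω → ℝ} (hN : Martingale N ℱ μ) {τ : ι → κ} (hτ : Monotone τ) :
    Martingale (fun i => N (τ i)) (ℱ.comp hτ) μ :=
  ⟨fun i => hN.stronglyMeasurable (τ i), fun _ _ hij => hN.condExp_ae_eq (hτ hij)⟩

theorem Martingale.submartingale_abs {ι : Type*} [Preorder ι] {ℱ : Filtration ι m}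
    {N : ι → Ω → ℝ} (hN : Martingale N ℱ μ) : Submartingale (fun i ω => |N i ω|) ℱ μ := by
  refine ⟨fun i => (hN.stronglyMeasurable i).norm, fun i j hij => ?_,
    fun i => (hN.integrable i).abs⟩
  have hle : μ[N j|ℱ i] ≤ᵐ[μ] μ[(fun ω => |N j ω|) | ℱ i] :=
    condExp_mono (hN.integrable j) (hN.integrable j).abs (ae_of_all _ fun ω => le_abs_self _)
  have hneg : μ[-N j|ℱ i] ≤ᵐ[μ] μ[(fun ω => |N j ω|) | ℱ i] :=
    condExp_mono (hN.integrable j).neg (hN.integrable j).abs (ae_of_all _ fun ω => neg_le_abs _)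
  filter_upwards [hN.condExp_ae_eq hij, hle, hneg, condExp_neg (N j) (ℱ i)] with ω h h₁ h₂ h₃
  rw [h₃, Pi.neg_apply, h] at h₂
  rw [h] at h₁
  exact abs_le.2 ⟨by linarith, h₁⟩

variable [IsFiniteMeasure μ] {ℱ : Filtration ℝ m} {N : ℝ → Ω → ℝ}

theorem Martingale.comp_min (hN : Martingale N ℱ μ) (s : ℝ) :
    Martingale (fun t => N (min t s)) ℱ μ := by
  refine ⟨fun t => (hN.stronglyMeasurable _).mono (ℱ.mono (min_le_left t s)), fun a b hab => ?_⟩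
  dsimp only
  rcases le_total s a with hsa | has
  · rw [min_eq_right (hsa.trans hab), min_eq_right hsa]
    exact (condExp_of_stronglyMeasurable (ℱ.le a) ((hN.stronglyMeasurable s).mono (ℱ.mono hsa))
      (hN.integrable s)).eventuallyEq
  · rw [min_eq_left has]
    exact hN.condExp_ae_eq (le_min hab has)

theorem Martingale.incr (hN : Martingale N ℱ μ) (s : ℝ) : Martingale (incr N s) ℱ μ :=
  hN.sub (hN.comp_min s)

theorem Martingale.uniformIntegrable_sub (hN : Martingale N ℱ μ) (t : ℝ) :
    UniformIntegrable (fun s : Iio t => fun ω => N t ω - N s ω) 1 μ := by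
  have hconst : UniformIntegrable (fun _ : Iio t => N t) 1 μ :=
    uniformIntegrable_const le_rfl ENNReal.one_ne_top (memLp_one_iff_integrable.2 (hN.integrable t))
  refine (hconst.sub le_rfl ((hN.integrable t).uniformIntegrable_condExp
    fun s : Iio t => ℱ.le s)).ae_eq fun s => ?_
  filter_upwards [hN.condExp_ae_eq s.2.le] with ω hω
  simp only [Pi.sub_apply, hω]

theorem Martingale.mul_measure_exists_le_abs_le (hN : Martingale N ℱ μ) {s : Finset ℝ} {r : ℝ}
    (hs : ∀ t ∈ s, t ≤ r) {c : ℝ} (hc : 0 ≤ c) :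
    ENNReal.ofReal c * μ {ω | ∃ t ∈ s, c ≤ |N t ω|} ≤ ENNReal.ofReal (∫ ω, |N r ω| ∂μ) := by
  classical
  set n := s.card
  -- list `s` increasingly and append the time `r`, to apply Doob's inequality in discrete time
  set τ : ℕ → ℝ := fun i => if h : i < n then s.orderEmbOfFin rfl ⟨i, h⟩ else r
  have hτ_mem : ∀ i (h : i < n), τ i = s.orderEmbOfFin rfl ⟨i, h⟩ := fun i h => dif_pos h
  have hτ_r : ∀ i, n ≤ i → τ i = r := fun i h => dif_neg h.not_gt
  have hτ : Monotone τ := by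
    intro i j hij
    by_cases hj : j < n
    · rw [hτ_mem i (hij.trans_lt hj), hτ_mem j hj]
      exact (s.orderEmbOfFin rfl).monotone hij
    · rw [hτ_r j (not_lt.1 hj)]
      by_cases hi : i < n
      · exact hτ_mem i hi ▸ hs _ (s.orderEmbOfFin_mem rfl _)
      · exact (hτ_r i (not_lt.1 hi)).le
  have hmax := maximal_ineq (hN.comp hτ).submartingale_abs (fun i ω => abs_nonneg _)
    (ε := c.toNNReal) n
  simp only [hτ_r n le_rfl, Real.coe_toNNReal c hc] at hmax
  refine le_trans ?_ (hmax.trans (ENNReal.ofReal_le_ofReal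
    (setIntegral_le_integral (hN.integrable r).abs (ae_of_all _ fun ω => abs_nonneg _))))
  refine mul_le_mul_right (measure_mono ?_) _
  rintro ω ⟨t, ht, hct⟩
  obtain ⟨i, rfl⟩ : t ∈ Set.range (s.orderEmbOfFin rfl) := by
    rwa [Finset.range_orderEmbOfFin]
  refine hct.trans ?_
  rw [← hτ_mem i i.2]
  exact Finset.le_sup' (fun k => |N (τ k) ω|) (Finset.mem_range.2 (Nat.lt_succ_of_lt i.2))

theorem Martingale.mul_measure_exists_rat_le_abs_le (hN : Martingale N ℱ μ) (r : ℝ) {c : ℝ}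
    (hc : 0 ≤ c) :
    ENNReal.ofReal c * μ {ω | ∃ q : ℚ, (q : ℝ) ≤ r ∧ c ≤ |N q ω|} ≤
      ENNReal.ofReal (∫ ω, |N r ω| ∂μ) := by
  classical
  set A : Finset ℚ → Set Ω := fun F => {ω | ∃ q ∈ F, (q : ℝ) ≤ r ∧ c ≤ |N q ω|}
  have hA : Monotone A := fun F G hFG ω ⟨q, hq, hqr, hcq⟩ => ⟨q, hFG hq, hqr, hcq⟩
  have hunion : {ω | ∃ q : ℚ, (q : ℝ) ≤ r ∧ c ≤ |N q ω|} = ⋃ F, A F := by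
    ext ω
    simp only [mem_iUnion, mem_ofPred_eq, A]
    exact ⟨fun ⟨q, hq⟩ => ⟨{q}, q, Finset.mem_singleton_self q, hq⟩,
      fun ⟨_, q, _, hq⟩ => ⟨q, hq⟩⟩
  rw [hunion, hA.measure_iUnion, ENNReal.mul_iSup]
  refine iSup_le fun F => le_trans (mul_le_mul_right (measure_mono ?_) _)
    (hN.mul_measure_exists_le_abs_le (s := (F.filter fun q : ℚ => (q : ℝ) ≤ r).image (↑))
      (by simp only [Finset.mem_image, Finset.mem_filter]; rintro _ ⟨q, ⟨-, hq⟩, rfl⟩; exact hq) hc)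
  rintro ω ⟨q, hq, hqr, hcq⟩
  exact ⟨q, Finset.mem_image_of_mem _ (Finset.mem_filter.2 ⟨hq, hqr⟩), hcq⟩

theorem Martingale.ae_exists_forall_rat_le_abs_lt (hN : Martingale N ℱ μ)
    (hlim : Tendsto (fun s => ∫ ω, |N s ω| ∂μ) atBot (𝓝 0)) {c : ℝ} (hc : 0 < c) :
    ∀ᵐ ω ∂μ, ∃ n : ℕ, ∀ q : ℚ, (q : ℝ) ≤ -n → |N q ω| < c := by
  set A : ℕ → Set Ω := fun n => {ω | ∃ q : ℚ, (q : ℝ) ≤ -n ∧ c ≤ |N q ω|}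
  have hlim' : Tendsto (fun n : ℕ => ENNReal.ofReal (∫ ω, |N (-n) ω| ∂μ)) atTop (𝓝 0) := by
    simpa only [ENNReal.ofReal_zero, Function.comp_def] using ENNReal.tendsto_ofReal
      (hlim.comp (tendsto_neg_atTop_atBot.comp tendsto_natCast_atTop_atTop))
  have hmul : ENNReal.ofReal c * μ (⋂ n, A n) = 0 :=
    le_antisymm (ge_of_tendsto' hlim' fun n => (mul_le_mul_right (measure_mono
      (iInter_subset A n)) _).trans (hN.mul_measure_exists_rat_le_abs_le (-n) hc.le)) bot_le
  have hA : μ (⋂ n, A n) = 0 :=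
    (mul_eq_zero.1 hmul).resolve_left (ENNReal.ofReal_pos.2 hc).ne'
  filter_upwards [measure_eq_zero_iff_ae_notMem.1 hA] with ω hω
  simp only [A, mem_iInter, mem_ofPred_eq, not_forall, not_exists, not_and, not_le] at hω
  exact hω

theorem Martingale.ae_tendsto_zero_atBot (hN : Martingale N ℱ μ)
    (hrc : ∀ ω t, ContinuousWithinAt (fun s => N s ω) (Ici t) t)
    (hlim : Tendsto (fun s => ∫ ω, |N s ω| ∂μ) atBot (𝓝 0)) :
    ∀ᵐ ω ∂μ, Tendsto (fun s => N s ω) atBot (𝓝 0) := by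
  have hsmall := ae_all_iff.2 fun j : ℕ =>
    hN.ae_exists_forall_rat_le_abs_lt hlim (c := 1 / (j + 1)) (by positivity)
  filter_upwards [hsmall] with ω hω
  refine Metric.tendsto_nhds.2 fun ε hε => ?_
  obtain ⟨j, hj⟩ := exists_nat_one_div_lt hε
  obtain ⟨n, hn⟩ := hω j
  filter_upwards [eventually_lt_atBot (-(n : ℝ))] with s hs
  rw [Real.dist_eq, sub_zero]
  exact (abs_le_of_forall_rat_le (hrc ω s) hs fun q hq => (hn q hq).le).trans_lt hj

end Martingale

end MeasureTheory

section IncrementMartingale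

variable {Ω : Type*} {m : MeasurableSpace Ω} {μ : Measure Ω} {ℱ : Filtration ℝ m}
  {M : ℝ → Ω → ℝ}

theorem CompleteFiltration.stronglyMeasurable_of_ae_eq (hcpl : CompleteFiltration ℱ μ) {t : ℝ}
    {f g : Ω → ℝ} (hg : StronglyMeasurable[ℱ t] g) (hfg : f =ᵐ[μ] g) :
    StronglyMeasurable[ℱ t] f := by
  have : (μ.trim (ℱ.le t)).IsComplete :=
    ⟨fun s hs => hcpl t s (nonpos_iff_eq_zero.1 ((le_trim _).trans hs.le))⟩
  have hnull : μ {ω | g ω ≠ f ω} = 0 := ae_iff.1 hfg.symm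
  have hgf : g =ᵐ[μ.trim (ℱ.le t)] f := by
    rwa [EventuallyEq, ae_iff, trim_measurableSet_eq _ (hcpl t _ hnull)]
  exact (@Measurable.congr_ae Ω ℝ (ℱ t) _ _ this _ _ hg.measurable hgf).stronglyMeasurable

theorem isMart_iff_martingale : IsMart ℱ μ M ↔ Martingale M ℱ μ :=
  ⟨And.left, fun h => ⟨h, h.integrable⟩⟩

theorem incr_of_le (M : ℝ → Ω → ℝ) {s t : ℝ} (h : s ≤ t) :
    incr M s t = fun ω => M t ω - M s ω := by
  funext ω
  rw [incr, min_eq_right h]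

theorem incr_sub_right (M : ℝ → Ω → ℝ) (Z : Ω → ℝ) (s : ℝ) :
    incr (fun t ω => M t ω - Z ω) s = incr M s := by
  ext t ω
  simp only [incr]
  ring

end IncrementMartingale

namespace IsIncMart

variable {Ω : Type*} {m : MeasurableSpace Ω} {μ : Measure Ω} {ℱ : Filtration ℝ m}
  {M : ℝ → Ω → ℝ}

theorem integrable_sub (hM : IsIncMart ℱ μ M) (s u : ℝ) :
    Integrable (fun ω => M s ω - M u ω) μ := by
  rcases le_total u s with h | h
  · simpa only [incr_of_le M h] using (hM.2 u).2 s
  · have h' := ((hM.2 s).2 u).neg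
    rw [incr_of_le M h] at h'
    simpa only [Pi.neg_def, neg_sub] using h'

theorem condExp_sub (hM : IsIncMart ℱ μ M) {u a b : ℝ} (hua : u ≤ a) (hab : a ≤ b) :
    μ[fun ω => M b ω - M u ω|ℱ a] =ᵐ[μ] fun ω => M a ω - M u ω := by
  simpa only [incr_of_le M (hua.trans hab), incr_of_le M hua] using
    (hM.2 u).1.condExp_ae_eq hab

theorem martingale_sub (hM : IsIncMart ℱ μ M) (hcpl : CompleteFiltration ℱ μ) {Z : Ω → ℝ}
    (hZ : ∀ s, Integrable (fun ω => M s ω - Z ω) μ)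
    (hlim : Tendsto (fun s => ∫ ω, |M s ω - Z ω| ∂μ) atBot (𝓝 0)) :
    Martingale (fun t ω => M t ω - Z ω) ℱ μ := by
  set N : ℝ → Ω → ℝ := fun t ω => M t ω - Z ω
  have hcond : ∀ a b, a ≤ b → μ[N b|ℱ a] =ᵐ[μ] N a := by
    intro a b hab
    -- for `u ≤ a`, the defect of the martingale property at `(a, b)` equals that of `N u`
    have hbound : ∀ u ≤ a, ∫ ω, |μ[N b|ℱ a] ω - N a ω| ∂μ ≤ 2 * ∫ ω, |N u ω| ∂μ := by
      intro u hua
      have hsplit : N b = (fun ω => M b ω - M u ω) + N u := by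
        ext ω; simp only [N, Pi.add_apply]; ring
      have hdefect : (fun ω => |μ[N b|ℱ a] ω - N a ω|) =ᵐ[μ] fun ω => |μ[N u|ℱ a] ω - N u ω| := by
        rw [hsplit]
        filter_upwards [condExp_add (hM.integrable_sub b u) (hZ u) (ℱ a),
          hM.condExp_sub hua hab] with ω h₁ h₂
        simp only [h₁, h₂, Pi.add_apply, N]
        ring_nf
      rw [integral_congr_ae hdefect]
      exact integral_abs_condExp_sub_le (hZ u)
    have hzero : ∫ ω, |μ[N b|ℱ a] ω - N a ω| ∂μ = 0 := by
      refine le_antisymm (ge_of_tendsto ?_ ((eventually_le_atBot a).mono hbound))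
        (integral_nonneg fun ω => abs_nonneg _)
      simpa only [mul_zero] using hlim.const_mul 2
    have hae := (integral_eq_zero_iff_of_nonneg (fun ω => abs_nonneg _)
      (integrable_condExp.sub (hZ a)).abs).1 hzero
    filter_upwards [hae] with ω hω
    simpa only [Pi.zero_apply, Pi.sub_apply, abs_eq_zero, sub_eq_zero] using hω
  exact ⟨fun t => hcpl.stronglyMeasurable_of_ae_eq stronglyMeasurable_condExp
    (hcond t t le_rfl).symm, hcond⟩

variable [IsProbabilityMeasure μ]

theorem exists_forall_le_integral_abs_sub_le (hM : IsIncMart ℱ μ M)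
    (hUI : UniformIntegrable (fun s : Iio (0 : ℝ) => fun ω => M 0 ω - M s ω) 1 μ) {ε : ℝ}
    (hε : 0 < ε) : ∃ S, ∀ u ≤ S, ∫ ω, |M S ω - M u ω| ∂μ ≤ ε := by
  by_contra! h
  choose g hg_le hg_gt using h
  set T : ℕ → ℝ := fun n => g^[n] (-1)
  have hT_succ : ∀ n, T (n + 1) = g (T n) := fun n => Function.iterate_succ_apply' g n (-1)
  have hT : Antitone T := antitone_nat_of_succ_le fun n => (hT_succ n).symm ▸ hg_le (T n)
  have hT_neg : ∀ n, T n < 0 := fun n => (hT n.zero_le).trans_lt (by norm_num [T])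
  obtain ⟨C, hC⟩ := hUI.exists_memLp_two_approx (δ := ε / 4) (by positivity)
  obtain ⟨N, hN⟩ := exists_nat_gt (C / (ε / 2) ^ 2)
  obtain ⟨V, hV, hV_sq, hWV⟩ := hC ⟨T N, hT_neg N⟩
  -- `W := M 0 - M (T N)` has conditional expectations `M (T k) - M (T N)` along the times `T k`
  have hjumps : ∀ k < N, ε / 2 + 2 * (ε / 4) ≤
      ∫ ω, |μ[fun ω => M 0 ω - M (T N) ω|ℱ (T k)] ω
        - μ[fun ω => M 0 ω - M (T N) ω|ℱ (T (k + 1))] ω| ∂μ := fun k hk => by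
    have hk₀ := hM.condExp_sub (hT hk.le) (hT_neg k).le
    have hk₁ := hM.condExp_sub (hT (Nat.succ_le_of_lt hk)) (hT_neg (k + 1)).le
    rw [integral_congr_ae (by
      filter_upwards [hk₀, hk₁] with ω h₀ h₁; rw [h₀, h₁, sub_sub_sub_cancel_right])]
    linarith [hT_succ k ▸ hg_gt (T k)]
  have hcount := card_mul_sq_le_of_le_integral_abs_condExp_sub (𝒢 := fun k => ℱ (T k))
    (fun i j hij => ℱ.mono (hT hij)) (fun k => ℱ.le _) (hM.integrable_sub 0 (T N)) hV
    (by positivity) hWV hjumps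
  rw [div_lt_iff₀ (by positivity)] at hN
  linarith

theorem exists_tendsto_integral_abs_sub (hM : IsIncMart ℱ μ M)
    (hUI : UniformIntegrable (fun s : Iio (0 : ℝ) => fun ω => M 0 ω - M s ω) 1 μ) :
    ∃ Z : Ω → ℝ, (∀ s, Integrable (fun ω => M s ω - Z ω) μ) ∧
      Tendsto (fun s => ∫ ω, |M s ω - Z ω| ∂μ) atBot (𝓝 0) := by
  obtain ⟨ξ, hξ, hlim⟩ := exists_integrable_tendsto_integral_abs_sub (l := atBot)
    (X := fun s ω => M s ω - M 0 ω) (fun s => hM.integrable_sub s 0) fun ε hε => by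
      obtain ⟨S, hS⟩ := hM.exists_forall_le_integral_abs_sub_le hUI (half_pos hε)
      refine ⟨Iic S, Iic_mem_atBot S, fun i hi j hj => ?_⟩
      have hij : ∀ ω, M i ω - M 0 ω - (M j ω - M 0 ω) = (M S ω - M j ω) - (M S ω - M i ω) :=
        fun ω => by ring
      simp only [hij]
      linarith [integral_abs_sub_le_add (hM.integrable_sub S j) (hM.integrable_sub S i),
        hS i hi, hS j hj]
  have hZ : ∀ s, (fun ω => M s ω - (M 0 ω + ξ ω)) = fun ω => M s ω - M 0 ω - ξ ω := fun s => by
    ext ω; ring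
  exact ⟨fun ω => M 0 ω + ξ ω, fun s => hZ s ▸ (hM.integrable_sub s 0).sub hξ,
    by simpa only [sub_add_eq_sub_sub] using hlim⟩

end IsIncMart

theorem stmt6_general {Ω : Type*} {m : MeasurableSpace Ω} {μ : Measure Ω} [IsProbabilityMeasure μ]
    (ℱ : Filtration ℝ m) (hcpl : CompleteFiltration ℱ μ)
    (M : ℝ → Ω → ℝ) (hcad : ∀ ω, Cadlag fun t => M t ω) :
    (∃ Z : Ω → ℝ, (∀ᵐ ω ∂μ, Tendsto (fun s => M s ω) atBot (nhds (Z ω))) ∧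
        IsMart ℱ μ fun t ω => M t ω - Z ω) ↔
      (IsIncMart ℱ μ M ∧
        UniformIntegrable (fun s : Set.Iio (0 : ℝ) => fun ω => M 0 ω - M (s : ℝ) ω) 1 μ) := by
  constructor
  · rintro ⟨Z, -, hN⟩
    rw [isMart_iff_martingale] at hN
    refine ⟨⟨hcad, fun s => ?_⟩, ?_⟩
    · simpa only [isMart_iff_martingale, incr_sub_right] using hN.incr s
    · simpa only [sub_sub_sub_cancel_right] using hN.uniformIntegrable_sub 0
  · rintro ⟨hM, hUI⟩
    obtain ⟨Z, hZ, hlim⟩ := hM.exists_tendsto_integral_abs_sub hUI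
    have hN := hM.martingale_sub hcpl hZ hlim
    have hrc : ∀ ω t, ContinuousWithinAt (fun s => M s ω - Z ω) (Ici t) t := fun ω t =>
      ((hcad ω).1 t).sub continuousWithinAt_const
    refine ⟨Z, ?_, isMart_iff_martingale.2 hN⟩
    filter_upwards [hN.ae_tendsto_zero_atBot hrc hlim] with ω hω
    simpa only [sub_add_cancel, zero_add] using hω.add_const (Z ω)

/-- for a càdlàg process `M`, the following are equivalent:
(a) `M_{-∞}` exists a.s. and `(M_t - M_{-∞})_t` is a martingale;
(b) `M` is an increment martingale and `(M_0 - M_s)_{s<0}` is uniformly integrable. -/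
theorem stmt6 {Ω : Type*} {m : MeasurableSpace Ω} {μ : Measure Ω} [IsProbabilityMeasure μ]
    (ℱ : Filtration ℝ m) (hrc : RightContinuousFiltration ℱ) (hcpl : CompleteFiltration ℱ μ)
    (M : ℝ → Ω → ℝ) (hcad : ∀ ω, Cadlag fun t => M t ω) :
    (∃ Z : Ω → ℝ, (∀ᵐ ω ∂μ, Tendsto (fun s => M s ω) atBot (nhds (Z ω))) ∧
        IsMart ℱ μ fun t ω => M t ω - Z ω) ↔
      (IsIncMart ℱ μ M ∧
        UniformIntegrable (fun s : Set.Iio (0 : ℝ) => fun ω => M 0 ω - M (s : ℝ) ω) 1 μ) :=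
  stmt6_general ℱ hcpl M hcad
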